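/- Robustness of the controllable-mirror SQKD protocol (algebraic core). Let E be a complex vector space and let (E_{m,n})_{m,n ≥ 0} be a finitely supported family in E with E_{m,n} = 0 whenever m > 0 and n > 0 (i.e., Alice's SWAP-ALL measurement never yields result 11). Set φ₁₀ = Σ_{m ≥ 1} x^m ⊗ E_{m,0}, φ₀₁ = Σ_{n ≥ 1} y^n ⊗ E_{0,n}, and φ₀₀ = 1 ⊗ E_{0,0} in ℂ[x,y] ⊗ E. Let V : ℂ[x,y] ⊗ E → ℂ[x,y] ⊗ E be a ℂ-linear map satisfying: (a) V φ₀₀ = 1 ⊗ H₀₀ for some H₀₀ ∈ E; (b) every E-coefficient of V φ₁₀ on a monomial x^j y^k with k ≥ 1 is zero (Bob never detects a photon in the |0⟩ mode on SWAP-01 rounds with Alice's sum 0); (c) every E-coefficient of V φ₀₁ on a monomial x^j y^k with j ≥ 1 is zero (Bob never detects a photon in the |1⟩ mode on SWAP-10 rounds with Alice's sum 0); (d) V(φ₁₀ + φ₀₁ + φ₀₀) has zero probability of a photon in the |−⟩ mode (Bob never gets measurement result 10 or 11 in the Hadamard basis on CTRL rounds). Then there exist vectors F, F₀, G₀ ∈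 E such that V φ₁₀ = x ⊗ F + 1 ⊗ F₀ and V φ₀₁ = y ⊗ F + 1 ⊗ G₀. Consequently V(φ₀₁ + φ₀₀) = y ⊗ F + 1 ⊗ (G₀ + H₀₀) and V(φ₁₀ + φ₀₀) = x ⊗ F + 1 ⊗ (F₀ + H₀₀): the auxiliary (Eve) vector attached to the single-photon component is the same vector F in both cases, so the state of Eve's probe is independent of which SWAP operation (SWAP-10 or SWAP-01) Alice performed whenever Alice and Bob share a bit. -/

import Mathlib

/-!
Hypotheses (b) and (c) say that `V φ₁₀` contains only powers of `x` and `V φ₀₁` only powers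
of `y`, with `E`-coefficients `aₙ` and `bₙ` say. The Hadamard change sends `xⁿ` and `yⁿ` to
`2^(-n/2) (u ∓ v)ⁿ`, so for `n = d + k` the coefficient of `u^d v^k` in the image of
`V (φ₁₀ + φ₀₁ + φ₀₀)` is `2^(-n/2) (n choose k) ((-1)^k aₙ + bₙ)`; the vacuum term `1 ⊗ H₀₀`
contributes nothing. By (d) this vanishes for `k ≥ 1`: `k = 1` gives `aₙ = bₙ` for `n ≥ 1`, and
then `k = 2` gives `2 aₙ = 0` for `n ≥ 2`. Only the vacuum and the single-photon terms survive,
and the single-photon vector `F = a₁ = b₁` is shared.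
-/

open MvPolynomial TensorProduct

/-- The `E`-coefficient of the monomial `X 0 ^ j * X 1 ^ k` of an element of
`ℂ[X 0, X 1] ⊗[ℂ] E` (with `x = X 0` the `|1⟩` mode and `y = X 1` the `|0⟩` mode). -/
noncomputable def Ecoeff (E : Type*) [AddCommGroup E] [Module ℂ E] (j k : ℕ) :
    MvPolynomial (Fin 2) ℂ ⊗[ℂ] E →ₗ[ℂ] E :=
  TensorProduct.lift
    ((LinearMap.lsmul ℂ E).comp
      (MvPolynomial.lcoeff ℂ (Finsupp.single 0 j + Finsupp.single 1 k)))

/-- The Hadamard mode change: the `ℂ`-algebra substitution `x ↦ (u − v)/√2`,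
`y ↦ (u + v)/√2`, where `x = X 0`, `y = X 1` in the source and `u = X 0`,
`v = X 1` in the target. -/
noncomputable def hadamard : MvPolynomial (Fin 2) ℂ →ₐ[ℂ] MvPolynomial (Fin 2) ℂ :=
  MvPolynomial.aeval
    ![((Real.sqrt 2 : ℂ))⁻¹ • ((X 0 : MvPolynomial (Fin 2) ℂ) - X 1),
      ((Real.sqrt 2 : ℂ))⁻¹ • ((X 0 : MvPolynomial (Fin 2) ℂ) + X 1)]

/-- `ψ` has zero probability of a photon in the `|−⟩` mode: for every `(j,k)`
with `k ≥ 1`, the `E`-coefficient of `u^j v^k` in `(h ⊗ id) ψ` is zero. -/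
def NoMinusPhoton {E : Type*} [AddCommGroup E] [Module ℂ E]
    (ψ : MvPolynomial (Fin 2) ℂ ⊗[ℂ] E) : Prop :=
  ∀ j k : ℕ, 1 ≤ k → Ecoeff E j k (LinearMap.rTensor E hadamard.toLinearMap ψ) = 0

section Monomials

variable {R : Type*} [CommSemiring R]

lemma Finsupp.single_zero_add_single_one_inj {a b c d : ℕ} :
    Finsupp.single (0 : Fin 2) a + Finsupp.single 1 b
      = Finsupp.single 0 c + Finsupp.single 1 d ↔ a = c ∧ b = d := by
  refine ⟨fun h ↦ ⟨by simpa using congr($h 0), by simpa using congr($h 1)⟩, ?_⟩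
  rintro ⟨rfl, rfl⟩
  rfl

lemma Finsupp.single_zero_add_single_one_eq (d : Fin 2 →₀ ℕ) :
    Finsupp.single 0 (d 0) + Finsupp.single 1 (d 1) = d := by
  ext i
  fin_cases i <;> simp

lemma MvPolynomial.coeff_X_add_smul_X_pow (ε : R) (n d k : ℕ) :
    coeff (Finsupp.single 0 d + Finsupp.single 1 k) ((X 0 + ε • X 1 : MvPolynomial (Fin 2) R) ^ n)
      = if d + k = n then ε ^ k * n.choose k else 0 := by
  have hterm (m : ℕ × ℕ) : n.choose m.1 • ((X 0 : MvPolynomial (Fin 2) R) ^ m.1 * (ε • X 1) ^ m.2)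
      = monomial (Finsupp.single 0 m.1 + Finsupp.single 1 m.2) (ε ^ m.2 * n.choose m.1) := by
    rw [monomial_fin_two]
    simp [nsmul_eq_mul, smul_eq_C_mul]
    ring
  rw [(Commute.all (X 0 : MvPolynomial (Fin 2) R) (ε • X 1)).add_pow']
  simp only [hterm, coeff_sum, coeff_monomial, Finsupp.single_zero_add_single_one_inj,
    ← Prod.mk.injEq, Prod.mk.eta, Finset.sum_ite_eq']
  split_ifs with h h' h' <;> rw [Finset.HasAntidiagonal.mem_antidiagonal] at h
  · rw [← h', Nat.choose_symm_add]
  all_goals tauto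

end Monomials

section Coefficients

variable {E : Type*} [AddCommGroup E] [Module ℂ E]

variable (E) in
noncomputable def Ecoeffs : MvPolynomial (Fin 2) ℂ ⊗[ℂ] E ≃ₗ[ℂ] (Fin 2 →₀ ℕ) →₀ E :=
  equivFinsuppOfBasisLeft (basisMonomials (Fin 2) ℂ)

@[simp]
lemma Ecoeffs_tmul_apply (p : MvPolynomial (Fin 2) ℂ) (c : E) (d : Fin 2 →₀ ℕ) :
    Ecoeffs E (p ⊗ₜ c) d = coeff d p • c :=
  equivFinsuppOfBasisLeft_apply_tmul_apply _ _ _ _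

@[simp]
lemma Ecoeff_tmul (j k : ℕ) (p : MvPolynomial (Fin 2) ℂ) (c : E) :
    Ecoeff E j k (p ⊗ₜ c) = coeff (Finsupp.single 0 j + Finsupp.single 1 k) p • c :=
  rfl

lemma Ecoeff_eq_Ecoeffs (j k : ℕ) (ψ : MvPolynomial (Fin 2) ℂ ⊗[ℂ] E) :
    Ecoeff E j k ψ = Ecoeffs E ψ (Finsupp.single 0 j + Finsupp.single 1 k) := by
  induction ψ using TensorProduct.induction_on with
  | zero => simp
  | tmul p c => simp
  | add ψ ψ' h h' => simp [h, h']

lemma Ecoeff_rTensor (f : MvPolynomial (Fin 2) ℂ →ₗ[ℂ] MvPolynomial (Fin 2) ℂ)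
    (ψ : MvPolynomial (Fin 2) ℂ ⊗[ℂ] E) (j k : ℕ) :
    Ecoeff E j k (f.rTensor E ψ) = (Ecoeffs E ψ).sum fun d c ↦
      coeff (Finsupp.single 0 j + Finsupp.single 1 k) (f (monomial d 1)) • c := by
  conv_lhs => rw [← (Ecoeffs E).symm_apply_apply ψ, Ecoeffs, equivFinsuppOfBasisLeft_symm_apply]
  simp only [Finsupp.sum, map_sum, LinearMap.rTensor_tmul, Ecoeff_tmul]
  rfl

def IsSingleMode (i : Fin 2) (ψ : MvPolynomial (Fin 2) ℂ ⊗[ℂ] E) : Prop :=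
  ∀ d : Fin 2 →₀ ℕ, d ≠ Finsupp.single i (d i) → Ecoeffs E ψ d = 0

lemma Ecoeff_rTensor_of_isSingleMode (f : MvPolynomial (Fin 2) ℂ →ₐ[ℂ] MvPolynomial (Fin 2) ℂ)
    {i : Fin 2} {c ε : ℂ} (hf : f (X i) = c • (X 0 + ε • X 1))
    {ψ : MvPolynomial (Fin 2) ℂ ⊗[ℂ] E} (hψ : IsSingleMode i ψ) (d k : ℕ) :
    Ecoeff E d k (f.toLinearMap.rTensor E ψ)
      = (c ^ (d + k) * (d + k).choose k) • ε ^ k • Ecoeffs E ψ (Finsupp.single i (d + k)) := by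
  have hmono (n : ℕ) : f (monomial (Finsupp.single i n) 1) = c ^ n • (X 0 + ε • X 1) ^ n := by
    rw [← X_pow_eq_monomial, map_pow, hf, smul_pow]
  rw [Ecoeff_rTensor, Finsupp.sum_eq_single (Finsupp.single i (d + k))]
  · simp only [AlgHom.toLinearMap_apply, hmono, coeff_smul, coeff_X_add_smul_X_pow, if_pos,
      smul_smul]
    congr 1
    ring
  · intro m _ hm
    by_cases hmi : m = Finsupp.single i (m i)
    · have : d + k ≠ m i := fun h ↦ hm (by rw [hmi, h])
      rw [hmi, AlgHom.toLinearMap_apply, hmono, coeff_smul, coeff_X_add_smul_X_pow, if_neg this,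
        smul_zero, zero_smul]
    · rw [hψ m hmi, smul_zero]
  · exact fun _ ↦ smul_zero _

lemma Ecoeff_rTensor_one_tmul (f : MvPolynomial (Fin 2) ℂ →ₐ[ℂ] MvPolynomial (Fin 2) ℂ) (c : E)
    {d k : ℕ} (hk : k ≠ 0) : Ecoeff E d k (f.toLinearMap.rTensor E (1 ⊗ₜ c)) = 0 := by
  have : (0 : Fin 2 →₀ ℕ) ≠ Finsupp.single 0 d + Finsupp.single 1 k := fun h ↦ hk <| by
    simpa using congr($h 1).symm
  rw [LinearMap.rTensor_tmul, AlgHom.toLinearMap_apply, map_one, Ecoeff_tmul, coeff_one,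
    if_neg this, zero_smul]

lemma isSingleMode_zero_of_Ecoeff {ψ : MvPolynomial (Fin 2) ℂ ⊗[ℂ] E}
    (h : ∀ j k : ℕ, 1 ≤ k → Ecoeff E j k ψ = 0) : IsSingleMode 0 ψ := by
  intro d hd
  rw [← Finsupp.single_zero_add_single_one_eq d, ← Ecoeff_eq_Ecoeffs]
  refine h _ _ (Nat.one_le_iff_ne_zero.mpr fun h1 ↦ hd ?_)
  rw [← Finsupp.single_zero_add_single_one_eq d, h1]
  simp

lemma isSingleMode_one_of_Ecoeff {ψ : MvPolynomial (Fin 2) ℂ ⊗[ℂ] E}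
    (h : ∀ j k : ℕ, 1 ≤ j → Ecoeff E j k ψ = 0) : IsSingleMode 1 ψ := by
  intro d hd
  rw [← Finsupp.single_zero_add_single_one_eq d, ← Ecoeff_eq_Ecoeffs]
  refine h _ _ (Nat.one_le_iff_ne_zero.mpr fun h0 ↦ hd ?_)
  rw [← Finsupp.single_zero_add_single_one_eq d, h0]
  simp

lemma eq_X_tmul_add_one_tmul_of_isSingleMode {i : Fin 2} {ψ : MvPolynomial (Fin 2) ℂ ⊗[ℂ] E}
    (hψ : IsSingleMode i ψ) (h2 : ∀ n, Ecoeffs E ψ (Finsupp.single i (n + 2)) = 0) :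
    ψ = X i ⊗ₜ Ecoeffs E ψ (Finsupp.single i 1) + 1 ⊗ₜ Ecoeffs E ψ 0 := by
  refine (Ecoeffs E).injective (Finsupp.ext fun d ↦ ?_)
  rw [map_add, Finsupp.add_apply, Ecoeffs_tmul_apply, Ecoeffs_tmul_apply, coeff_X, coeff_one]
  by_cases hd : d = Finsupp.single i (d i)
  · rw [hd]
    rcases d i with _ | _ | n
    · simp
    · simp [eq_comm (a := (0 : Fin 2 →₀ ℕ))]
    · have h0 : 0 ≠ Finsupp.single i (n + 2) := (Finsupp.single_ne_zero.mpr (by omega)).symm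
      rw [h2, if_neg (by simp), if_neg h0, zero_smul, zero_smul, add_zero]
  · have h1 : Finsupp.single i 1 ≠ d := fun h ↦ hd (by rw [← h]; simp)
    have h0 : 0 ≠ d := fun h ↦ hd (by rw [← h]; simp)
    rw [hψ d hd, if_neg h1, if_neg h0, zero_smul, zero_smul, add_zero]

end Coefficients

lemma eq_and_eq_zero_of_neg_one_pow_smul_add_eq_zero {K M : Type*} [DivisionRing K] [CharZero K]
    [AddCommGroup M] [Module K M] {a b : ℕ → M}
    (h : ∀ d k, 1 ≤ k → (-1 : K) ^ k • a (d + k) + b (d + k) = 0) :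
    (∀ d, a (d + 1) = b (d + 1)) ∧ ∀ d, a (d + 2) = 0 := by
  have hab (d : ℕ) : a (d + 1) = b (d + 1) := by
    simpa [neg_add_eq_zero] using h d 1 le_rfl
  refine ⟨hab, fun d ↦ ?_⟩
  have h2 := h d 2 (by norm_num)
  rw [neg_one_sq, one_smul, ← hab (d + 1), ← two_smul K] at h2
  exact (smul_eq_zero.mp h2).resolve_left two_ne_zero

section Hadamard

variable {E : Type*} [AddCommGroup E] [Module ℂ E]

lemma hadamard_X_zero : hadamard (X 0) = (√2 : ℂ)⁻¹ • (X 0 + (-1 : ℂ) • X 1) := by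
  simp [hadamard, sub_eq_add_neg]

lemma hadamard_X_one : hadamard (X 1) = (√2 : ℂ)⁻¹ • (X 0 + (1 : ℂ) • X 1) := by
  simp [hadamard]

lemma neg_one_pow_smul_add_eq_zero_of_noMinusPhoton {ψ₁ ψ₂ : MvPolynomial (Fin 2) ℂ ⊗[ℂ] E}
    (h₁ : IsSingleMode 0 ψ₁) (h₂ : IsSingleMode 1 ψ₂) (c : E)
    (h : NoMinusPhoton (ψ₁ + ψ₂ + 1 ⊗ₜ c)) (d k : ℕ) (hk : 1 ≤ k) :
    (-1 : ℂ) ^ k • Ecoeffs E ψ₁ (Finsupp.single 0 (d + k))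
      + Ecoeffs E ψ₂ (Finsupp.single 1 (d + k)) = 0 := by
  have hs : ((√2 : ℂ)⁻¹ ^ (d + k) * (d + k).choose k : ℂ) ≠ 0 :=
    mul_ne_zero (pow_ne_zero _ (inv_ne_zero (by simp)))
      (Nat.cast_ne_zero.mpr (Nat.choose_pos (by omega)).ne')
  have := h d k hk
  rw [map_add, map_add, map_add, map_add, Ecoeff_rTensor_of_isSingleMode _ hadamard_X_zero h₁,
    Ecoeff_rTensor_of_isSingleMode _ hadamard_X_one h₂, Ecoeff_rTensor_one_tmul _ _ (by omega),
    add_zero, one_pow, one_smul, ← smul_add] at this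
  exact (smul_eq_zero.mp this).resolve_left hs

end Hadamard

theorem stmt5_general {E : Type*} [AddCommGroup E] [Module ℂ E]
    (φ10 φ01 φ00 : MvPolynomial (Fin 2) ℂ ⊗[ℂ] E)
    (V : MvPolynomial (Fin 2) ℂ ⊗[ℂ] E →ₗ[ℂ] MvPolynomial (Fin 2) ℂ ⊗[ℂ] E)
    (H00 : E)
    (ha : V φ00 = (1 : MvPolynomial (Fin 2) ℂ) ⊗ₜ[ℂ] H00)
    (hb : ∀ j k : ℕ, 1 ≤ k → Ecoeff E j k (V φ10) = 0)
    (hc : ∀ j k : ℕ, 1 ≤ j → Ecoeff E j k (V φ01) = 0)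
    (hd : NoMinusPhoton (V (φ10 + φ01 + φ00))) :
    ∃ F F0 G0 : E,
      V φ10 = (X 0 : MvPolynomial (Fin 2) ℂ) ⊗ₜ[ℂ] F
          + (1 : MvPolynomial (Fin 2) ℂ) ⊗ₜ[ℂ] F0
      ∧ V φ01 = (X 1 : MvPolynomial (Fin 2) ℂ) ⊗ₜ[ℂ] F
          + (1 : MvPolynomial (Fin 2) ℂ) ⊗ₜ[ℂ] G0
      ∧ V (φ01 + φ00) = (X 1 : MvPolynomial (Fin 2) ℂ) ⊗ₜ[ℂ] F
          + (1 : MvPolynomial (Fin 2) ℂ) ⊗ₜ[ℂ] (G0 + H00)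
      ∧ V (φ10 + φ00) = (X 0 : MvPolynomial (Fin 2) ℂ) ⊗ₜ[ℂ] F
          + (1 : MvPolynomial (Fin 2) ℂ) ⊗ₜ[ℂ] (F0 + H00) := by
  have h10 := isSingleMode_zero_of_Ecoeff hb
  have h01 := isSingleMode_one_of_Ecoeff hc
  rw [map_add, map_add, ha] at hd
  obtain ⟨hF, hmulti⟩ := eq_and_eq_zero_of_neg_one_pow_smul_add_eq_zero
    (a := fun n ↦ Ecoeffs E (V φ10) (Finsupp.single 0 n))
    (b := fun n ↦ Ecoeffs E (V φ01) (Finsupp.single 1 n))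
    (neg_one_pow_smul_add_eq_zero_of_noMinusPhoton h10 h01 H00 hd)
  have hV10 := eq_X_tmul_add_one_tmul_of_isSingleMode h10 hmulti
  have hV01 := eq_X_tmul_add_one_tmul_of_isSingleMode h01 fun d ↦
    (hF (d + 1)).symm.trans (hmulti d)
  rw [← hF 0] at hV01
  refine ⟨_, _, _, hV10, hV01, ?_, ?_⟩
  · rw [map_add, ha, tmul_add, ← add_assoc, ← hV01]
  · rw [map_add, ha, tmul_add, ← add_assoc, ← hV10]

/-- Robustness of the controllable-mirror SQKD protocol (algebraic core):
if Eve's second attack `V` causes no detectable errors (hypotheses (a)–(d)),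
then the Eve vector attached to the single-photon component of `V φ₁₀` and
`V φ₀₁` is the same vector `F`, so Eve's probe is independent of which SWAP
operation Alice performed whenever Alice and Bob share a bit. -/
theorem stmt5 {E : Type*} [AddCommGroup E] [Module ℂ E]
    (Efam : ℕ → ℕ → E) (hfin : (Function.support (Function.uncurry Efam)).Finite)
    (hE11 : ∀ m n : ℕ, 0 < m → 0 < n → Efam m n = 0)
    (φ10 φ01 φ00 : MvPolynomial (Fin 2) ℂ ⊗[ℂ] E)
    (hφ10 : φ10 = ∑ᶠ m ∈ Set.Ici 1, ((X 0 : MvPolynomial (Fin 2) ℂ) ^ m) ⊗ₜ[ℂ] Efam m 0)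
    (hφ01 : φ01 = ∑ᶠ n ∈ Set.Ici 1, ((X 1 : MvPolynomial (Fin 2) ℂ) ^ n) ⊗ₜ[ℂ] Efam 0 n)
    (hφ00 : φ00 = (1 : MvPolynomial (Fin 2) ℂ) ⊗ₜ[ℂ] Efam 0 0)
    (V : MvPolynomial (Fin 2) ℂ ⊗[ℂ] E →ₗ[ℂ] MvPolynomial (Fin 2) ℂ ⊗[ℂ] E)
    (H00 : E)
    (ha : V φ00 = (1 : MvPolynomial (Fin 2) ℂ) ⊗ₜ[ℂ] H00)
    (hb : ∀ j k : ℕ, 1 ≤ k → Ecoeff E j k (V φ10) = 0)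
    (hc : ∀ j k : ℕ, 1 ≤ j → Ecoeff E j k (V φ01) = 0)
    (hd : NoMinusPhoton (V (φ10 + φ01 + φ00))) :
    ∃ F F0 G0 : E,
      V φ10 = (X 0 : MvPolynomial (Fin 2) ℂ) ⊗ₜ[ℂ] F
          + (1 : MvPolynomial (Fin 2) ℂ) ⊗ₜ[ℂ] F0
      ∧ V φ01 = (X 1 : MvPolynomial (Fin 2) ℂ) ⊗ₜ[ℂ] F
          + (1 : MvPolynomial (Fin 2) ℂ) ⊗ₜ[ℂ] G0
      ∧ V (φ01 + φ00) = (X 1 : MvPolynomial (Fin 2) ℂ) ⊗ₜ[ℂ] F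
          + (1 : MvPolynomial (Fin 2) ℂ) ⊗ₜ[ℂ] (G0 + H00)
      ∧ V (φ10 + φ00) = (X 0 : MvPolynomial (Fin 2) ℂ) ⊗ₜ[ℂ] F
          + (1 : MvPolynomial (Fin 2) ℂ) ⊗ₜ[ℂ] (F0 + H00) :=
  stmt5_general φ10 φ01 φ00 V H00 ha hb hc hd
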